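/- arXiv:2309.01753 — 2 statements merged into one kernel-verified Lean document; each statement's English description precedes it below -/
import Mathlib

section
/- Let ρ ≤ 1/(8 l_{g,1}), σ l_{f,1} ≤ l_{g,1}, and define the Moreau-type envelope h*_{σ,ρ}(x,y) := min_{w∈Y} [ h_σ(x,w) + (1/(2ρ))‖w − y‖² ]. Then h*_{σ,ρ} is continuously differentiable jointly in (x,y) on X×ℝ^{d_y}, with ∇_x h*_{σ,ρ}(x,y) = ∇_x h_σ(x, w*) and ∇_y h*_{σ,ρ}(x,y) = ρ^{-1}(y − w*), where w* = prox_{ρ h_σ(x,·)}(y); moreover its gradient is Lipschitz continuous with constant 2/ρ (jointly in (x,y)). -/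
open Set
open scoped InnerProductSpace

/-!
Write `h = σ f + g`, `L = 2 l_{g,1}` (a Lipschitz constant of `∇h` with `ρ L ≤ 1/4`) and
`K(w, (x, y)) = h(x, w) + ‖w - y‖² / (2ρ)`, so that the envelope is `K(prox x y, (x, y))`.
The prox objective `w ↦ ρ h(x, w) + ‖w - y‖² / 2` has a `(1 - ρL)`-strongly monotone gradient, so
its minimizer over the convex set `Y` beats every `w ∈ Y` by `(1 - ρL)/2 ‖w - prox x y‖²`. Adding
this at two base points and bounding the mixed second difference of `h` by `L ‖Δx‖ ‖Δw‖` gives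
`(1 - ρL) ‖Δw‖² ≤ ρL ‖Δx‖ ‖Δw‖ + ⟪Δw, Δy⟫`, so `prox` is `5/3`-Lipschitz for the sup norm on
`E × F`. With `w₀ = prox x y` the envelope lies between `K(w₀, ·) - C ‖· - (x, y)‖²` and
`K(w₀, ·)`, hence has the derivative of `K(w₀, ·)` at `(x, y)`. The same inequality gives
`‖Δy - Δw‖ ≤ 3/2 ‖Δ(x, y)‖`, and with `‖Δ∇ₓh‖ ≤ L · 5/3 ‖Δ(x, y)‖` this yields the constant `2/ρ`.
-/

section NormedSpace

variable {E F G : Type*} [NormedAddCommGroup E] [NormedSpace ℝ E] [NormedAddCommGroup F]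
  [NormedSpace ℝ F] [NormedAddCommGroup G] [NormedSpace ℝ G]

theorem add_half_le_of_hasDerivAt {φ φ' : ℝ → ℝ} {c : ℝ} (hφ : ∀ t, HasDerivAt φ (φ' t) t)
    (hgrowth : ∀ t ∈ Ioo (0 : ℝ) 1, c * t ≤ φ' t - φ' 0) : φ 0 + φ' 0 + c / 2 ≤ φ 1 := by
  let χ : ℝ → ℝ := fun t => φ t - φ' 0 * t - c / 2 * t ^ 2
  have hχ : ∀ t, HasDerivAt χ (φ' t - φ' 0 - c * t) t := fun t =>
    (((hφ t).sub ((hasDerivAt_id' t).const_mul (φ' 0))).sub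
      ((hasDerivAt_pow 2 t).const_mul (c / 2))).congr_deriv (by norm_num; ring)
  have hmono : MonotoneOn χ (Icc 0 1) := by
    refine monotoneOn_of_hasDerivWithinAt_nonneg (convex_Icc 0 1)
      (fun t _ => (hχ t).continuousAt.continuousWithinAt) (fun t _ => (hχ t).hasDerivWithinAt)
      fun t ht => ?_
    rw [interior_Icc] at ht
    linarith [hgrowth t ht]
  have := hmono (left_mem_Icc.2 zero_le_one) (right_mem_Icc.2 zero_le_one) zero_le_one
  simp only [χ] at this
  linarith

theorem HasFDerivAt.of_le_of_sub_sq_le {φ ψ : E → ℝ} {A : E →L[ℝ] ℝ} {x : E} {C : ℝ}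
    (hψ : HasFDerivAt ψ A x) (hx : φ x = ψ x) (hlow : ∀ p, ψ p - C * ‖p - x‖ ^ 2 ≤ φ p)
    (hup : ∀ p, φ p ≤ ψ p) : HasFDerivAt φ A x := by
  have hr : HasFDerivAt (fun p => φ p - ψ p) (0 : E →L[ℝ] ℝ) x := by
    rw [hasFDerivAt_iff_isLittleO_nhds_zero]
    refine (Asymptotics.IsBigO.of_bound C (Filter.Eventually.of_forall fun h => ?_)).trans_isLittleO
      (Asymptotics.isLittleO_norm_pow_id one_lt_two)
    have hlo := hlow (x + h)
    have hhi := hup (x + h)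
    rw [add_sub_cancel_left] at hlo
    rw [hx, sub_self, sub_zero, zero_apply, sub_zero, Real.norm_eq_abs,
      abs_of_nonpos (by linarith), norm_pow, norm_norm]
    linarith
  simpa only [add_sub_cancel, add_zero] using hψ.fun_add hr

theorem norm_fderiv_const_mul_add_sub_le {f g : E → ℝ} (hf : Differentiable ℝ f)
    (hg : Differentiable ℝ g) {σ lf lg : ℝ} (hσ : 0 ≤ σ)
    (hLf : ∀ p q, ‖fderiv ℝ f p - fderiv ℝ f q‖ ≤ lf * ‖p - q‖)
    (hLg : ∀ p q, ‖fderiv ℝ g p - fderiv ℝ g q‖ ≤ lg * ‖p - q‖) (p q : E) :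
    ‖fderiv ℝ (fun p => σ * f p + g p) p - fderiv ℝ (fun p => σ * f p + g p) q‖
      ≤ (σ * lf + lg) * ‖p - q‖ := by
  have hfd : ∀ p, fderiv ℝ (fun p => σ * f p + g p) p = σ • fderiv ℝ f p + fderiv ℝ g p :=
    fun p => by rw [fderiv_fun_add ((hf p).const_mul σ) (hg p), fderiv_const_mul (hf p) σ]
  rw [hfd, hfd, add_sub_add_comm, ← smul_sub]
  calc _ ≤ ‖σ • (fderiv ℝ f p - fderiv ℝ f q)‖ + ‖fderiv ℝ g p - fderiv ℝ g q‖ := norm_add_le _ _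
    _ ≤ σ * (lf * ‖p - q‖) + lg * ‖p - q‖ := by
      rw [norm_smul, Real.norm_of_nonneg hσ]
      gcongr
      exacts [hLf p q, hLg p q]
    _ = (σ * lf + lg) * ‖p - q‖ := by ring

namespace ContinuousLinearMap

theorem norm_comp_inl_le (A : E × F →L[ℝ] G) : ‖A.comp (inl ℝ E F)‖ ≤ ‖A‖ :=
  (A.opNorm_comp_le _).trans (mul_le_of_le_one_right A.opNorm_nonneg (norm_inl_le_one _ _ _))

theorem norm_comp_inr_le (A : E × F →L[ℝ] G) : ‖A.comp (inr ℝ E F)‖ ≤ ‖A‖ :=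
  (A.opNorm_comp_le _).trans (mul_le_of_le_one_right A.opNorm_nonneg (norm_inr_le_one _ _ _))

theorem norm_comp_fst_le (A : E →L[ℝ] G) : ‖A.comp (fst ℝ E F)‖ ≤ ‖A‖ :=
  (A.opNorm_comp_le _).trans (mul_le_of_le_one_right A.opNorm_nonneg (norm_fst_le _ _ _))

theorem norm_comp_snd_le (A : F →L[ℝ] G) : ‖A.comp (snd ℝ E F)‖ ≤ ‖A‖ :=
  (A.opNorm_comp_le _).trans (mul_le_of_le_one_right A.opNorm_nonneg (norm_snd_le _ _ _))

end ContinuousLinearMap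

variable {H : E × F → G} {L : ℝ}

theorem hasFDerivAt_comp_prodMk_left (hH : Differentiable ℝ H) (x : E) (w : F) :
    HasFDerivAt (fun x' => H (x', w)) ((fderiv ℝ H (x, w)).comp (.inl ℝ E F)) x :=
  (hH _).hasFDerivAt.comp x (hasFDerivAt_prodMk_left x w)

theorem hasFDerivAt_comp_prodMk_right (hH : Differentiable ℝ H) (x : E) (w : F) :
    HasFDerivAt (fun w' => H (x, w')) ((fderiv ℝ H (x, w)).comp (.inr ℝ E F)) w :=
  (hH _).hasFDerivAt.comp w (hasFDerivAt_prodMk_right x w)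

theorem norm_sub_sub_sub_le_of_fderiv_lipschitz (hH : Differentiable ℝ H)
    (hL : ∀ p q, ‖fderiv ℝ H p - fderiv ℝ H q‖ ≤ L * ‖p - q‖) (x₁ x₂ : E) (w₁ w₂ : F) :
    ‖H (x₁, w₁) - H (x₂, w₁) - (H (x₁, w₂) - H (x₂, w₂))‖ ≤ L * ‖x₁ - x₂‖ * ‖w₁ - w₂‖ := by
  have hderiv : ∀ w ∈ univ, HasFDerivWithinAt (fun w => H (x₁, w) - H (x₂, w))
      ((fderiv ℝ H (x₁, w) - fderiv ℝ H (x₂, w)).comp (.inr ℝ E F)) univ w := fun w _ => by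
    rw [ContinuousLinearMap.sub_comp]
    exact ((hasFDerivAt_comp_prodMk_right hH x₁ w).sub
      (hasFDerivAt_comp_prodMk_right hH x₂ w)).hasFDerivWithinAt
  have hbound : ∀ w ∈ univ,
      ‖(fderiv ℝ H (x₁, w) - fderiv ℝ H (x₂, w)).comp (.inr ℝ E F)‖ ≤ L * ‖x₁ - x₂‖ := fun w _ =>
    calc _ ≤ ‖fderiv ℝ H (x₁, w) - fderiv ℝ H (x₂, w)‖ := ContinuousLinearMap.norm_comp_inr_le _
      _ ≤ L * ‖(x₁, w) - (x₂, w)‖ := hL _ _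
      _ = L * ‖x₁ - x₂‖ := by simp
  exact convex_univ.norm_image_sub_le_of_norm_hasFDerivWithin_le hderiv hbound
    (mem_univ w₂) (mem_univ w₁)

end NormedSpace

section InnerProductSpace

variable {F : Type*} [NormedAddCommGroup F] [InnerProductSpace ℝ F]

theorem DifferentiableAt.hasFDerivAt_innerSL_gradient [CompleteSpace F] {φ : F → ℝ} {x : F}
    (h : DifferentiableAt ℝ φ x) : HasFDerivAt φ (innerSL ℝ (gradient φ x)) x :=
  h.hasGradientAt.hasFDerivAt

theorem norm_gradient_sub_gradient [CompleteSpace F] {φ₁ φ₂ : F → ℝ} {A₁ A₂ : F →L[ℝ] ℝ}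
    {x₁ x₂ : F} (h₁ : HasFDerivAt φ₁ A₁ x₁) (h₂ : HasFDerivAt φ₂ A₂ x₂) :
    ‖gradient φ₁ x₁ - gradient φ₂ x₂‖ = ‖A₁ - A₂‖ := by
  rw [gradient, gradient, h₁.fderiv, h₂.fderiv, ← map_sub, LinearIsometryEquiv.norm_map]

theorem add_inner_add_sq_le_of_strongMono {ψ : F → ℝ} {ψ' : F → F} {μ : ℝ}
    (hψ : ∀ w, HasFDerivAt ψ (innerSL ℝ (ψ' w)) w)
    (hmono : ∀ u v, μ * ‖u - v‖ ^ 2 ≤ ⟪ψ' u - ψ' v, u - v⟫_ℝ) (w₀ w : F) :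
    ψ w₀ + ⟪ψ' w₀, w - w₀⟫_ℝ + μ / 2 * ‖w - w₀‖ ^ 2 ≤ ψ w := by
  set d := w - w₀
  have hline : ∀ t : ℝ, HasDerivAt (fun t : ℝ => ψ (w₀ + t • d)) ⟪ψ' (w₀ + t • d), d⟫_ℝ t :=
    fun t => ((hψ _).comp_hasDerivAt t
      (((hasDerivAt_id' t).smul_const d).const_add w₀)).congr_deriv (by simp)
  have key := add_half_le_of_hasDerivAt (c := μ * ‖d‖ ^ 2) hline fun t ht => by
    have h := hmono (w₀ + t • d) w₀
    rw [add_sub_cancel_left, norm_smul, Real.norm_eq_abs, abs_of_pos ht.1, inner_smul_right,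
      inner_sub_left] at h
    simp only [zero_smul, add_zero]
    nlinarith [ht.1]
  simp only [zero_smul, add_zero, one_smul, d, add_sub_cancel] at key
  linarith

theorem Convex.add_sq_le_of_isMinOn_of_strongMono {Y : Set F} (hY : Convex ℝ Y) {ψ : F → ℝ}
    {ψ' : F → F} {μ : ℝ} (hψ : ∀ w, HasFDerivAt ψ (innerSL ℝ (ψ' w)) w)
    (hmono : ∀ u v, μ * ‖u - v‖ ^ 2 ≤ ⟪ψ' u - ψ' v, u - v⟫_ℝ) {w₀ w : F} (hw₀ : w₀ ∈ Y)
    (hmin : IsMinOn ψ Y w₀) (hw : w ∈ Y) : ψ w₀ + μ / 2 * ‖w - w₀‖ ^ 2 ≤ ψ w := by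
  have hfirst : 0 ≤ ⟪ψ' w₀, w - w₀⟫_ℝ :=
    hmin.localize.hasFDerivWithinAt_nonneg (hψ w₀).hasFDerivWithinAt
      (sub_mem_posTangentConeAt_of_segment_subset (hY.segment_subset hw₀ hw))
  linarith [add_inner_add_sq_le_of_strongMono hψ hmono w₀ w]

theorem norm_sub_sq_sub_sub_sub (w₁ w₂ y₁ y₂ : F) :
    ‖w₁ - y₁‖ ^ 2 - ‖w₂ - y₁‖ ^ 2 - (‖w₁ - y₂‖ ^ 2 - ‖w₂ - y₂‖ ^ 2)
      = -(2 * ⟪w₁ - w₂, y₁ - y₂⟫_ℝ) := by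
  simp only [norm_sub_sq_real, inner_sub_left, inner_sub_right]
  ring

end InnerProductSpace

section ProxMap

variable {E F : Type*} [NormedAddCommGroup F] {H : E × F → ℝ} {ρ : ℝ} {Y : Set F}
  {prox : E → F → F}

variable (H) in
noncomputable def moreauObj (ρ : ℝ) (w : F) (p : E × F) : ℝ := H (p.1, w) + ‖w - p.2‖ ^ 2 / (2 * ρ)

variable (H) in
def IsProxMap (ρ : ℝ) (Y : Set F) (prox : E → F → F) : Prop :=
  ∀ x y, prox x y ∈ Y ∧ ∀ w ∈ Y,
    ρ * H (x, prox x y) + ‖prox x y - y‖ ^ 2 / 2 ≤ ρ * H (x, w) + ‖w - y‖ ^ 2 / 2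

theorem IsProxMap.moreauObj_le (hprox : IsProxMap H ρ Y prox) (hρ : 0 < ρ) (p : E × F) {w : F}
    (hw : w ∈ Y) : moreauObj H ρ (prox p.1 p.2) p ≤ moreauObj H ρ w p := by
  have hscale : ∀ w', moreauObj H ρ w' p = (ρ * H (p.1, w') + ‖w' - p.2‖ ^ 2 / 2) / ρ :=
    fun w' => by simp only [moreauObj]; field_simp
  rw [hscale, hscale]
  exact div_le_div_of_nonneg_right ((hprox p.1 p.2).2 w hw) hρ.le

theorem IsProxMap.isLeast_moreauObj (hprox : IsProxMap H ρ Y prox) (hρ : 0 < ρ) (p : E × F) :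
    IsLeast ((fun w => moreauObj H ρ w p) '' Y) (moreauObj H ρ (prox p.1 p.2) p) :=
  ⟨mem_image_of_mem _ (hprox p.1 p.2).1, forall_mem_image.2 fun _ hw => hprox.moreauObj_le hρ p hw⟩

end ProxMap

section MoreauEnvelope

variable {E F : Type*} [NormedAddCommGroup E] [InnerProductSpace ℝ E] [NormedAddCommGroup F]
  [InnerProductSpace ℝ F] {H : E × F → ℝ} {L ρ : ℝ} {Y : Set F} {prox : E → F → F}

theorem norm_gradient_comp_prodMk_left_sub_le [CompleteSpace E] (hH : Differentiable ℝ H)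
    (hL : ∀ p q, ‖fderiv ℝ H p - fderiv ℝ H q‖ ≤ L * ‖p - q‖) (x₁ x₂ : E) (w₁ w₂ : F) :
    ‖gradient (fun x => H (x, w₁)) x₁ - gradient (fun x => H (x, w₂)) x₂‖
      ≤ L * ‖(x₁, w₁) - (x₂, w₂)‖ := by
  rw [norm_gradient_sub_gradient (hasFDerivAt_comp_prodMk_left hH x₁ w₁)
    (hasFDerivAt_comp_prodMk_left hH x₂ w₂), ← ContinuousLinearMap.sub_comp]
  calc _ ≤ ‖fderiv ℝ H (x₁, w₁) - fderiv ℝ H (x₂, w₂)‖ := ContinuousLinearMap.norm_comp_inl_le _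
    _ ≤ _ := hL _ _

theorem norm_gradient_comp_prodMk_right_sub_le [CompleteSpace F] (hH : Differentiable ℝ H)
    (hL : ∀ p q, ‖fderiv ℝ H p - fderiv ℝ H q‖ ≤ L * ‖p - q‖) (x : E) (w₁ w₂ : F) :
    ‖gradient (fun w => H (x, w)) w₁ - gradient (fun w => H (x, w)) w₂‖ ≤ L * ‖w₁ - w₂‖ := by
  rw [norm_gradient_sub_gradient (hasFDerivAt_comp_prodMk_right hH x w₁)
    (hasFDerivAt_comp_prodMk_right hH x w₂), ← ContinuousLinearMap.sub_comp]
  calc _ ≤ ‖fderiv ℝ H (x, w₁) - fderiv ℝ H (x, w₂)‖ := ContinuousLinearMap.norm_comp_inr_le _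
    _ ≤ L * ‖(x, w₁) - (x, w₂)‖ := hL _ _
    _ = L * ‖w₁ - w₂‖ := by simp

variable (H) in
noncomputable def moreauObjGrad [CompleteSpace E] (ρ : ℝ) (w : F) (p : E × F) : E × F →L[ℝ] ℝ :=
  (innerSL ℝ (gradient (fun x => H (x, w)) p.1)).comp (.fst ℝ E F)
    + (innerSL ℝ (ρ⁻¹ • (p.2 - w))).comp (.snd ℝ E F)

theorem hasFDerivAt_moreauObj [CompleteSpace E] (hH : Differentiable ℝ H) (ρ : ℝ) (w : F)
    (p : E × F) : HasFDerivAt (moreauObj H ρ w) (moreauObjGrad H ρ w p) p := by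
  have hsnd : HasFDerivAt (Prod.snd : E × F → F) (.snd ℝ E F) p := hasFDerivAt_snd
  have hquad := (hsnd.const_sub w).norm_sq.mul_const (2 * ρ)⁻¹
  rw [show moreauObj H ρ w = fun q => H (q.1, w) + ‖w - q.2‖ ^ 2 * (2 * ρ)⁻¹ by
    funext q; simp only [moreauObj, div_eq_mul_inv]]
  have hlin := (hasFDerivAt_comp_prodMk_left hH p.1 w).differentiableAt
    |>.hasFDerivAt_innerSL_gradient.comp p hasFDerivAt_fst
  refine hlin.add (hquad.congr_fderiv ?_)
  ext v
  · simp
  · simp; ring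

theorem abs_moreauObj_sub_sub_sub_le (hH : Differentiable ℝ H)
    (hL : ∀ p q, ‖fderiv ℝ H p - fderiv ℝ H q‖ ≤ L * ‖p - q‖) (hL₀ : 0 ≤ L) (hρ : 0 ≤ ρ)
    (w₁ w₂ : F) (p q : E × F) :
    |moreauObj H ρ w₁ p - moreauObj H ρ w₂ p - (moreauObj H ρ w₁ q - moreauObj H ρ w₂ q)|
      ≤ (L + ρ⁻¹) * ‖w₁ - w₂‖ * ‖p - q‖ := by
  have hsplit : moreauObj H ρ w₁ p - moreauObj H ρ w₂ p - (moreauObj H ρ w₁ q - moreauObj H ρ w₂ q)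
      = (H (p.1, w₁) - H (q.1, w₁) - (H (p.1, w₂) - H (q.1, w₂)))
        - ρ⁻¹ * ⟪w₁ - w₂, p.2 - q.2⟫_ℝ := by
    have := norm_sub_sq_sub_sub_sub w₁ w₂ p.2 q.2
    simp only [moreauObj]
    linear_combination (2 * ρ)⁻¹ * this
  have h₁ := norm_sub_sub_sub_le_of_fderiv_lipschitz hH hL p.1 q.1 w₁ w₂
  rw [Real.norm_eq_abs] at h₁
  have h₂ : |ρ⁻¹ * ⟪w₁ - w₂, p.2 - q.2⟫_ℝ| ≤ ρ⁻¹ * (‖w₁ - w₂‖ * ‖p.2 - q.2‖) := by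
    rw [abs_mul, abs_of_nonneg (inv_nonneg.2 hρ)]
    exact mul_le_mul_of_nonneg_left (abs_real_inner_le_norm _ _) (inv_nonneg.2 hρ)
  have hfst : ‖p.1 - q.1‖ ≤ ‖p - q‖ := norm_fst_le (p - q)
  have hsnd : ‖p.2 - q.2‖ ≤ ‖p - q‖ := norm_snd_le (p - q)
  rw [hsplit]
  calc _ ≤ L * ‖p.1 - q.1‖ * ‖w₁ - w₂‖ + ρ⁻¹ * (‖w₁ - w₂‖ * ‖p.2 - q.2‖) :=
        (abs_sub _ _).trans (add_le_add h₁ h₂)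
    _ ≤ L * ‖p - q‖ * ‖w₁ - w₂‖ + ρ⁻¹ * (‖w₁ - w₂‖ * ‖p - q‖) := by gcongr
    _ = _ := by ring

theorem IsProxMap.add_sq_le [CompleteSpace F] (hprox : IsProxMap H ρ Y prox) (hY : Convex ℝ Y)
    (hH : Differentiable ℝ H) (hL : ∀ p q, ‖fderiv ℝ H p - fderiv ℝ H q‖ ≤ L * ‖p - q‖)
    (hρ : 0 ≤ ρ) (x : E) (y : F) {w : F} (hw : w ∈ Y) :
    ρ * H (x, prox x y) + ‖prox x y - y‖ ^ 2 / 2 + (1 - ρ * L) / 2 * ‖w - prox x y‖ ^ 2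
      ≤ ρ * H (x, w) + ‖w - y‖ ^ 2 / 2 := by
  let G : F → F := gradient fun w => H (x, w)
  have hψ : ∀ z, HasFDerivAt (fun w => ρ * H (x, w) + ‖w - y‖ ^ 2 / 2)
      (innerSL ℝ (ρ • G z + (z - y))) z := fun z => by
    have hquad := (hasFDerivAt_sub_const (x := z) y).norm_sq.mul_const (2 : ℝ)⁻¹
    simp only [div_eq_mul_inv]
    refine ((((hasFDerivAt_comp_prodMk_right hH x z).differentiableAt.hasFDerivAt_innerSL_gradient
      ).const_mul ρ).add hquad).congr_fderiv ?_
    ext v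
    simp [G]
  have hmono : ∀ u v, (1 - ρ * L) * ‖u - v‖ ^ 2
      ≤ ⟪(ρ • G u + (u - y)) - (ρ • G v + (v - y)), u - v⟫_ℝ := fun u v => by
    have hG : -(L * ‖u - v‖ * ‖u - v‖) ≤ ⟪G u - G v, u - v⟫_ℝ :=
      (neg_le_neg (mul_le_mul_of_nonneg_right (norm_gradient_comp_prodMk_right_sub_le hH hL x u v)
        (norm_nonneg _))).trans (neg_le_of_abs_le (abs_real_inner_le_norm _ _))
    rw [add_sub_add_comm, ← smul_sub, sub_sub_sub_cancel_right, inner_add_left,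
      real_inner_smul_left, real_inner_self_eq_norm_sq]
    nlinarith [mul_le_mul_of_nonneg_left hG hρ]
  have := hY.add_sq_le_of_isMinOn_of_strongMono hψ hmono (hprox x y).1
    (isMinOn_iff.2 (hprox x y).2) hw
  linarith

theorem IsProxMap.sq_norm_sub_le [CompleteSpace F] (hprox : IsProxMap H ρ Y prox)
    (hY : Convex ℝ Y) (hH : Differentiable ℝ H)
    (hL : ∀ p q, ‖fderiv ℝ H p - fderiv ℝ H q‖ ≤ L * ‖p - q‖) (hρ : 0 ≤ ρ) (x₁ x₂ : E)
    (y₁ y₂ : F) :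
    (1 - ρ * L) * ‖prox x₁ y₁ - prox x₂ y₂‖ ^ 2
      ≤ ρ * L * ‖x₁ - x₂‖ * ‖prox x₁ y₁ - prox x₂ y₂‖
        + ⟪prox x₁ y₁ - prox x₂ y₂, y₁ - y₂⟫_ℝ := by
  have h₁ := hprox.add_sq_le hY hH hL hρ x₁ y₁ (hprox x₂ y₂).1
  have h₂ := hprox.add_sq_le hY hH hL hρ x₂ y₂ (hprox x₁ y₁).1
  have hquad := norm_sub_sq_sub_sub_sub (prox x₁ y₁) (prox x₂ y₂) y₁ y₂
  have hmixed := norm_sub_sub_sub_le_of_fderiv_lipschitz hH hL x₁ x₂ (prox x₁ y₁) (prox x₂ y₂)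
  rw [Real.norm_eq_abs] at hmixed
  replace hmixed := mul_le_mul_of_nonneg_left (neg_le_of_abs_le hmixed) hρ
  rw [norm_sub_rev (prox x₂ y₂)] at h₁
  linarith

theorem IsProxMap.norm_sub_le [CompleteSpace F] (hprox : IsProxMap H ρ Y prox)
    (hY : Convex ℝ Y) (hH : Differentiable ℝ H)
    (hL : ∀ p q, ‖fderiv ℝ H p - fderiv ℝ H q‖ ≤ L * ‖p - q‖) (hρ : 0 ≤ ρ) (hρL : ρ * L ≤ 1 / 4)
    (x₁ x₂ : E) (y₁ y₂ : F) :
    ‖prox x₁ y₁ - prox x₂ y₂‖ ≤ 5 / 3 * ‖(x₁, y₁) - (x₂, y₂)‖ := by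
  have hkey := hprox.sq_norm_sub_le hY hH hL hρ x₁ x₂ y₁ y₂
  have hx : ‖x₁ - x₂‖ ≤ ‖(x₁, y₁) - (x₂, y₂)‖ := norm_fst_le ((x₁, y₁) - (x₂, y₂))
  have hy : ‖y₁ - y₂‖ ≤ ‖(x₁, y₁) - (x₂, y₂)‖ := norm_snd_le ((x₁, y₁) - (x₂, y₂))
  have hinner := real_inner_le_norm (prox x₁ y₁ - prox x₂ y₂) (y₁ - y₂)
  rcases (norm_nonneg (prox x₁ y₁ - prox x₂ y₂)).eq_or_lt with h₀ | h₀
  · rw [← h₀]; positivity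
  · have : (1 - ρ * L) * ‖prox x₁ y₁ - prox x₂ y₂‖ ≤ ρ * L * ‖x₁ - x₂‖ + ‖y₁ - y₂‖ :=
      le_of_mul_le_mul_right (by nlinarith) h₀
    nlinarith [norm_nonneg (x₁ - x₂)]

theorem IsProxMap.hasFDerivAt_moreauObj_prox [CompleteSpace E] [CompleteSpace F]
    (hprox : IsProxMap H ρ Y prox) (hY : Convex ℝ Y) (hH : Differentiable ℝ H)
    (hL : ∀ p q, ‖fderiv ℝ H p - fderiv ℝ H q‖ ≤ L * ‖p - q‖) (hL₀ : 0 ≤ L) (hρ : 0 < ρ)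
    (hρL : ρ * L ≤ 1 / 4) (p : E × F) :
    HasFDerivAt (fun q => moreauObj H ρ (prox q.1 q.2) q)
      (moreauObjGrad H ρ (prox p.1 p.2) p) p := by
  refine (hasFDerivAt_moreauObj hH ρ (prox p.1 p.2) p).of_le_of_sub_sq_le (C := (L + ρ⁻¹) * (5 / 3))
    rfl (fun q => ?_) fun q => hprox.moreauObj_le hρ q (hprox p.1 p.2).1
  have hmixed := neg_le_of_abs_le
    (abs_moreauObj_sub_sub_sub_le hH hL hL₀ hρ.le (prox q.1 q.2) (prox p.1 p.2) q p)
  have hmin := hprox.moreauObj_le hρ p (hprox q.1 q.2).1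
  have hlip : ‖prox q.1 q.2 - prox p.1 p.2‖ ≤ 5 / 3 * ‖q - p‖ :=
    hprox.norm_sub_le hY hH hL hρ.le hρL q.1 p.1 q.2 p.2
  have hC : (L + ρ⁻¹) * ‖prox q.1 q.2 - prox p.1 p.2‖ * ‖q - p‖
      ≤ (L + ρ⁻¹) * (5 / 3) * ‖q - p‖ ^ 2 := by
    have : 0 ≤ L + ρ⁻¹ := add_nonneg hL₀ (inv_nonneg.2 hρ.le)
    calc _ ≤ (L + ρ⁻¹) * (5 / 3 * ‖q - p‖) * ‖q - p‖ := by gcongr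
      _ = _ := by ring
  linarith

theorem norm_moreauObjGrad_sub_le [CompleteSpace E] (ρ : ℝ) (w₁ w₂ : F) (p q : E × F) :
    ‖moreauObjGrad H ρ w₁ p - moreauObjGrad H ρ w₂ q‖
      ≤ ‖gradient (fun x => H (x, w₁)) p.1 - gradient (fun x => H (x, w₂)) q.1‖
        + ‖ρ⁻¹ • (p.2 - w₁) - ρ⁻¹ • (q.2 - w₂)‖ := by
  have hsplit : moreauObjGrad H ρ w₁ p - moreauObjGrad H ρ w₂ q
      = (innerSL ℝ (gradient (fun x => H (x, w₁)) p.1 - gradient (fun x => H (x, w₂)) q.1)).comp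
          (.fst ℝ E F)
        + (innerSL ℝ (ρ⁻¹ • (p.2 - w₁) - ρ⁻¹ • (q.2 - w₂))).comp (.snd ℝ E F) := by
    ext v <;> simp [moreauObjGrad]
  rw [hsplit]
  refine (norm_add_le (_ : E × F →L[ℝ] ℝ) _).trans (add_le_add ?_ ?_)
  · exact (ContinuousLinearMap.norm_comp_fst_le _).trans_eq (innerSL_apply_norm _ _)
  · exact (ContinuousLinearMap.norm_comp_snd_le _).trans_eq (innerSL_apply_norm _ _)

theorem IsProxMap.norm_sub_sub_le [CompleteSpace F] (hprox : IsProxMap H ρ Y prox)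
    (hY : Convex ℝ Y) (hH : Differentiable ℝ H)
    (hL : ∀ p q, ‖fderiv ℝ H p - fderiv ℝ H q‖ ≤ L * ‖p - q‖) (hL₀ : 0 ≤ L) (hρ : 0 ≤ ρ)
    (hρL : ρ * L ≤ 1 / 4) (x₁ x₂ : E) (y₁ y₂ : F) :
    ‖(y₁ - y₂) - (prox x₁ y₁ - prox x₂ y₂)‖ ≤ 3 / 2 * ‖(x₁, y₁) - (x₂, y₂)‖ := by
  set m := ‖(x₁, y₁) - (x₂, y₂)‖
  set Δw := prox x₁ y₁ - prox x₂ y₂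
  have hx : ‖x₁ - x₂‖ ≤ m := norm_fst_le ((x₁, y₁) - (x₂, y₂))
  have hy : ‖y₁ - y₂‖ ≤ m := norm_snd_le ((x₁, y₁) - (x₂, y₂))
  have hw : ‖Δw‖ ≤ 5 / 3 * m := hprox.norm_sub_le hY hH hL hρ hρL x₁ x₂ y₁ y₂
  have hkey : (1 - ρ * L) * ‖Δw‖ ^ 2 ≤ ρ * L * ‖x₁ - x₂‖ * ‖Δw‖ + ⟪Δw, y₁ - y₂⟫_ℝ :=
    hprox.sq_norm_sub_le hY hH hL hρ x₁ x₂ y₁ y₂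
  have hρL₀ : 0 ≤ ρ * L := mul_nonneg hρ hL₀
  have hxw : ‖x₁ - x₂‖ * ‖Δw‖ ≤ m * (5 / 3 * m) := by gcongr
  have hm : 0 ≤ m * (5 / 3 * m) := by positivity
  have hsq : ‖(y₁ - y₂) - Δw‖ ^ 2 ≤ (3 / 2 * m) ^ 2 := by
    rw [norm_sub_sq_real, real_inner_comm]
    nlinarith [mul_le_mul_of_nonneg_left hxw hρL₀, mul_nonneg (by linarith : 0 ≤ 1 / 4 - ρ * L) hm,
      mul_nonneg (by linarith : 0 ≤ 1 - 2 * (ρ * L)) (sq_nonneg ‖Δw‖),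
      pow_le_pow_left₀ (norm_nonneg _) hy 2]
  exact (pow_le_pow_iff_left₀ (norm_nonneg _) (by positivity) two_ne_zero).1 hsq

theorem IsProxMap.norm_moreauObjGrad_prox_sub_le [CompleteSpace E] [CompleteSpace F]
    (hprox : IsProxMap H ρ Y prox) (hY : Convex ℝ Y) (hH : Differentiable ℝ H)
    (hL : ∀ p q, ‖fderiv ℝ H p - fderiv ℝ H q‖ ≤ L * ‖p - q‖) (hL₀ : 0 ≤ L) (hρ : 0 < ρ)
    (hρL : ρ * L ≤ 1 / 4) (p q : E × F) :
    ‖moreauObjGrad H ρ (prox p.1 p.2) p - moreauObjGrad H ρ (prox q.1 q.2) q‖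
      ≤ 2 / ρ * ‖p - q‖ := by
  have hLρ : L ≤ 1 / 4 * ρ⁻¹ := by
    rw [← div_eq_mul_inv, le_div_iff₀ hρ, mul_comm]
    exact hρL
  have hpair : ‖(p.1, prox p.1 p.2) - (q.1, prox q.1 q.2)‖ ≤ 5 / 3 * ‖p - q‖ :=
    norm_prod_le_iff.2 ⟨(norm_fst_le (p - q)).trans (by linarith [norm_nonneg (p - q)]),
      hprox.norm_sub_le hY hH hL hρ.le hρL p.1 q.1 p.2 q.2⟩
  have hfst : ‖gradient (fun x => H (x, prox p.1 p.2)) p.1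
      - gradient (fun x => H (x, prox q.1 q.2)) q.1‖ ≤ 5 / 12 * ρ⁻¹ * ‖p - q‖ :=
    calc _ ≤ L * ‖(p.1, prox p.1 p.2) - (q.1, prox q.1 q.2)‖ :=
          norm_gradient_comp_prodMk_left_sub_le hH hL _ _ _ _
      _ ≤ 1 / 4 * ρ⁻¹ * (5 / 3 * ‖p - q‖) := by gcongr
      _ = _ := by ring
  have hsnd : ‖(p.2 - q.2) - (prox p.1 p.2 - prox q.1 q.2)‖ ≤ 3 / 2 * ‖p - q‖ :=
    hprox.norm_sub_sub_le hY hH hL hL₀ hρ.le hρL p.1 q.1 p.2 q.2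
  calc _ ≤ _ := norm_moreauObjGrad_sub_le ρ _ _ p q
    _ ≤ 5 / 12 * ρ⁻¹ * ‖p - q‖ + ρ⁻¹ * (3 / 2 * ‖p - q‖) := by
      rw [← smul_sub, sub_sub_sub_comm, norm_smul, Real.norm_of_nonneg (inv_nonneg.2 hρ.le)]
      gcongr
    _ ≤ 2 / ρ * ‖p - q‖ := by
      rw [div_eq_mul_inv 2 ρ]
      linarith [mul_nonneg (inv_nonneg.2 hρ.le) (norm_nonneg (p - q))]

end MoreauEnvelope

theorem stmt12_general
    (dx dy : ℕ)
    (X : Set (EuclideanSpace ℝ (Fin dx)))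
    (Y : Set (EuclideanSpace ℝ (Fin dy)))
    (hYconv : Convex ℝ Y)
    (f g : EuclideanSpace ℝ (Fin dx) → EuclideanSpace ℝ (Fin dy) → ℝ)
    (lf1 lg1 σ ρ : ℝ)
    (hfC2 : ContDiff ℝ 2 (Function.uncurry f))
    (hgC2 : ContDiff ℝ 2 (Function.uncurry g))
    (hLipf : ∀ p q : EuclideanSpace ℝ (Fin dx) × EuclideanSpace ℝ (Fin dy),
      ‖fderiv ℝ (Function.uncurry f) p - fderiv ℝ (Function.uncurry f) q‖ ≤ lf1 * ‖p - q‖)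
    (hLipg : ∀ p q : EuclideanSpace ℝ (Fin dx) × EuclideanSpace ℝ (Fin dy),
      ‖fderiv ℝ (Function.uncurry g) p - fderiv ℝ (Function.uncurry g) q‖ ≤ lg1 * ‖p - q‖)
    (hρpos : 0 < ρ) (hρ : ρ ≤ 1 / (8 * lg1))
    (hσ : 0 ≤ σ) (hσl : σ * lf1 ≤ lg1)
    -- `prox x y` is the unique minimizer over `w ∈ Y` of `ρ h_σ(x,w) + ‖w − y‖²/2`
    (prox : EuclideanSpace ℝ (Fin dx) → EuclideanSpace ℝ (Fin dy) → EuclideanSpace ℝ (Fin dy))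
    (hprox : ∀ x y, prox x y ∈ Y ∧ ∀ w ∈ Y,
      ρ * (σ * f x (prox x y) + g x (prox x y)) + ‖prox x y - y‖ ^ 2 / 2
        ≤ ρ * (σ * f x w + g x w) + ‖w - y‖ ^ 2 / 2)
    -- the Moreau-type envelope `h*_{σ,ρ}`
    (env : EuclideanSpace ℝ (Fin dx) → EuclideanSpace ℝ (Fin dy) → ℝ)
    (henv : ∀ x y, env x y
      = sInf ((fun w => σ * f x w + g x w + ‖w - y‖ ^ 2 / (2 * ρ)) '' Y)) :
    ∃ D : EuclideanSpace ℝ (Fin dx) → EuclideanSpace ℝ (Fin dy) →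
        (EuclideanSpace ℝ (Fin dx) × EuclideanSpace ℝ (Fin dy) →L[ℝ] ℝ),
      (∀ x ∈ X, ∀ y : EuclideanSpace ℝ (Fin dy),
        HasFDerivAt (Function.uncurry env) (D x y) (x, y) ∧
        D x y = (innerSL ℝ (gradient (fun x' => σ * f x' (prox x y) + g x' (prox x y)) x)).comp
            (ContinuousLinearMap.fst ℝ (EuclideanSpace ℝ (Fin dx)) (EuclideanSpace ℝ (Fin dy)))
          + (innerSL ℝ (ρ⁻¹ • (y - prox x y))).comp
            (ContinuousLinearMap.snd ℝ (EuclideanSpace ℝ (Fin dx)) (EuclideanSpace ℝ (Fin dy)))) ∧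
      (∀ x₁ ∈ X, ∀ x₂ ∈ X, ∀ y₁ y₂ : EuclideanSpace ℝ (Fin dy),
        ‖D x₁ y₁ - D x₂ y₂‖
          ≤ (2 / ρ) * ‖((x₁, y₁) : EuclideanSpace ℝ (Fin dx) × EuclideanSpace ℝ (Fin dy))
              - (x₂, y₂)‖) := by
  have hlg : 0 < lg1 := by
    by_contra! h
    linarith [div_nonpos_of_nonneg_of_nonpos zero_le_one (by linarith : 8 * lg1 ≤ 0)]
  have hρL : ρ * (2 * lg1) ≤ 1 / 4 := by
    rw [le_div_iff₀ (by positivity)] at hρ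
    linarith
  let H := fun p : EuclideanSpace ℝ (Fin dx) × EuclideanSpace ℝ (Fin dy) =>
    σ * Function.uncurry f p + Function.uncurry g p
  have hdf := hfC2.differentiable (by norm_num)
  have hdg := hgC2.differentiable (by norm_num)
  have hH : Differentiable ℝ H := (hdf.const_mul σ).add hdg
  have hL : ∀ p q, ‖fderiv ℝ H p - fderiv ℝ H q‖ ≤ 2 * lg1 * ‖p - q‖ := fun p q =>
    (norm_fderiv_const_mul_add_sub_le hdf hdg hσ hLipf hLipg p q).trans
      (by gcongr; linarith)
  have hprox' : IsProxMap H ρ Y prox := hprox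
  have henv' : Function.uncurry env = fun p => moreauObj H ρ (prox p.1 p.2) p :=
    funext fun p => (henv p.1 p.2).trans (hprox'.isLeast_moreauObj hρpos p).csInf_eq
  refine ⟨fun x y => moreauObjGrad H ρ (prox x y) (x, y), fun x _ y => ⟨?_, rfl⟩,
    fun x₁ _ x₂ _ y₁ y₂ => hprox'.norm_moreauObjGrad_prox_sub_le hYconv hH hL (by positivity)
      hρpos hρL (x₁, y₁) (x₂, y₂)⟩
  rw [henv']
  exact hprox'.hasFDerivAt_moreauObj_prox hYconv hH hL (by positivity) hρpos hρL (x, y)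

/-- For `ρ ≤ 1/(8 l_{g,1})` and `σ l_{f,1} ≤ l_{g,1}`, the Moreau-type
envelope `h*_{σ,ρ}(x,y) = min_{w ∈ Y}[h_σ(x,w) + ‖w−y‖²/(2ρ)]` is continuously
differentiable jointly in `(x,y)` on `X × ℝ^{d_y}`, with
`∇_x h*_{σ,ρ}(x,y) = ∇_x h_σ(x,w*)` and `∇_y h*_{σ,ρ}(x,y) = ρ⁻¹(y − w*)` where
`w* = prox_{ρ h_σ(x,·)}(y)`; its gradient is `2/ρ`-Lipschitz jointly in `(x,y)`. -/
theorem stmt12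
    (dx dy : ℕ)
    (X : Set (EuclideanSpace ℝ (Fin dx)))
    (Y : Set (EuclideanSpace ℝ (Fin dy)))
    (hXne : X.Nonempty) (hXclosed : IsClosed X) (hXconv : Convex ℝ X)
    (hYne : Y.Nonempty) (hYclosed : IsClosed Y) (hYconv : Convex ℝ Y)
    (hYbdd : Bornology.IsBounded Y)
    (f g : EuclideanSpace ℝ (Fin dx) → EuclideanSpace ℝ (Fin dy) → ℝ)
    (lf1 lg1 σ ρ : ℝ)
    (hfC2 : ContDiff ℝ 2 (Function.uncurry f))
    (hgC2 : ContDiff ℝ 2 (Function.uncurry g))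
    (hLipf : ∀ p q : EuclideanSpace ℝ (Fin dx) × EuclideanSpace ℝ (Fin dy),
      ‖fderiv ℝ (Function.uncurry f) p - fderiv ℝ (Function.uncurry f) q‖ ≤ lf1 * ‖p - q‖)
    (hLipg : ∀ p q : EuclideanSpace ℝ (Fin dx) × EuclideanSpace ℝ (Fin dy),
      ‖fderiv ℝ (Function.uncurry g) p - fderiv ℝ (Function.uncurry g) q‖ ≤ lg1 * ‖p - q‖)
    (hρpos : 0 < ρ) (hρ : ρ ≤ 1 / (8 * lg1))
    (hσ : 0 ≤ σ) (hσl : σ * lf1 ≤ lg1)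
    -- `prox x y` is the unique minimizer over `w ∈ Y` of `ρ h_σ(x,w) + ‖w − y‖²/2`
    (prox : EuclideanSpace ℝ (Fin dx) → EuclideanSpace ℝ (Fin dy) → EuclideanSpace ℝ (Fin dy))
    (hprox : ∀ x y, prox x y ∈ Y ∧ ∀ w ∈ Y,
      ρ * (σ * f x (prox x y) + g x (prox x y)) + ‖prox x y - y‖ ^ 2 / 2
        ≤ ρ * (σ * f x w + g x w) + ‖w - y‖ ^ 2 / 2)
    -- the Moreau-type envelope `h*_{σ,ρ}`
    (env : EuclideanSpace ℝ (Fin dx) → EuclideanSpace ℝ (Fin dy) → ℝ)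
    (henv : ∀ x y, env x y
      = sInf ((fun w => σ * f x w + g x w + ‖w - y‖ ^ 2 / (2 * ρ)) '' Y)) :
    ∃ D : EuclideanSpace ℝ (Fin dx) → EuclideanSpace ℝ (Fin dy) →
        (EuclideanSpace ℝ (Fin dx) × EuclideanSpace ℝ (Fin dy) →L[ℝ] ℝ),
      (∀ x ∈ X, ∀ y : EuclideanSpace ℝ (Fin dy),
        HasFDerivAt (Function.uncurry env) (D x y) (x, y) ∧
        D x y = (innerSL ℝ (gradient (fun x' => σ * f x' (prox x y) + g x' (prox x y)) x)).comp
            (ContinuousLinearMap.fst ℝ (EuclideanSpace ℝ (Fin dx)) (EuclideanSpace ℝ (Fin dy)))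
          + (innerSL ℝ (ρ⁻¹ • (y - prox x y))).comp
            (ContinuousLinearMap.snd ℝ (EuclideanSpace ℝ (Fin dx)) (EuclideanSpace ℝ (Fin dy)))) ∧
      (∀ x₁ ∈ X, ∀ x₂ ∈ X, ∀ y₁ y₂ : EuclideanSpace ℝ (Fin dy),
        ‖D x₁ y₁ - D x₂ y₂‖
          ≤ (2 / ρ) * ‖((x₁, y₁) : EuclideanSpace ℝ (Fin dx) × EuclideanSpace ℝ (Fin dy))
              - (x₂, y₂)‖) :=
  stmt12_general dx dy X Y hYconv f g lf1 lg1 σ ρ hfC2 hgC2 hLipf hLipg hρpos hρ hσ hσl prox hprox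
    env henv
end

section
/- Suppose prox-EB holds with parameters μ, δ, σ₀ > 0. There is a universal constant C > 0 (independent of all problem data) such that for every x ∈ X, every σ ∈ [0, min(σ₀, δ/C_f)], and every y ∈ T(x,σ), the lower-level suboptimality of y is at most quadratic in σ: 0 ≤ g(x,y) − g*(x) ≤ C · (l_{f,0}²/μ) · σ². -/
/-!
Along the solution map `s ↦ T(x,s)` the prox step from a solution at level `s` to level `s - t`
moves by at most `2 ρ t l_{f,0}`, so prox-EB puts `T(x,s - t)` within `2 t l_{f,0} / μ` of it,
as soon as `2 t l_{f,0} ≤ δ`. Cutting `[0,σ]` into `N` such steps gives a chain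
`y = z₀, z₁, …, z_N ∈ T(x,0)`; optimality of `z_j` at level `s_j ≤ σ` gives
`g(z_j) - g(z_{j+1}) ≤ s_j (f(z_{j+1}) - f(z_j)) ≤ σ l_{f,0} ‖z_j - z_{j+1}‖`, and summing the `N`
increments yields `g(x,y) - g*(x) ≤ 2 (l_{f,0}²/μ) σ²`, whatever the number of steps.
-/

open Set Metric

section PenaltyArgmin

variable {E : Type*} {Y : Set E} {φ ψ : E → ℝ} {L s : ℝ}

def penaltyArgmin (Y : Set E) (φ ψ : E → ℝ) (s : ℝ) : Set E :=
  {y ∈ Y | ∀ z ∈ Y, s * φ y + ψ y ≤ s * φ z + ψ z}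

theorem le_of_mem_penaltyArgmin_zero {z y : E} (hz : z ∈ penaltyArgmin Y φ ψ 0) (hy : y ∈ Y) :
    ψ z ≤ ψ y := by
  simpa using hz.2 y hy

theorem csInf_image_eq_of_mem_penaltyArgmin_zero {z : E} (hz : z ∈ penaltyArgmin Y φ ψ 0) :
    sInf (ψ '' Y) = ψ z :=
  IsLeast.csInf_eq ⟨mem_image_of_mem ψ hz.1, forall_mem_image.2 fun _ hy =>
    le_of_mem_penaltyArgmin_zero hz hy⟩

variable [NormedAddCommGroup E]

theorem isClosed_penaltyArgmin (hY : IsClosed Y) (hφ : Continuous φ) (hψ : Continuous ψ) :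
    IsClosed (penaltyArgmin Y φ ψ s) := by
  have hcont : Continuous fun y => s * φ y + ψ y := (continuous_const.mul hφ).add hψ
  simp only [penaltyArgmin, ofPred_and, ofPred_mem_eq, ofPred_forall]
  exact hY.inter (isClosed_biInter fun z _ => isClosed_le hcont continuous_const)

theorem penaltyArgmin_nonempty (hY : IsCompact Y) (hYne : Y.Nonempty) (hφ : Continuous φ)
    (hψ : Continuous ψ) : (penaltyArgmin Y φ ψ s).Nonempty := by
  obtain ⟨z, hz, hmin⟩ :=
    hY.exists_isMinOn hYne ((continuous_const.mul hφ).add hψ).continuousOn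
  exact ⟨z, hz, fun w hw => hmin hw⟩

theorem sub_le_of_mem_penaltyArgmin (hφ : ∀ a ∈ Y, ∀ b ∈ Y, |φ a - φ b| ≤ L * ‖a - b‖)
    (hs : 0 ≤ s) {z z' : E} (hz : z ∈ penaltyArgmin Y φ ψ s) (hz' : z' ∈ Y) :
    ψ z - ψ z' ≤ s * L * ‖z - z'‖ := by
  have hopt := hz.2 z' hz'
  have hlip : φ z' - φ z ≤ L * ‖z - z'‖ := by
    rw [norm_sub_rev]; exact (le_abs_self _).trans (hφ z' hz' z hz.1)
  nlinarith [mul_le_mul_of_nonneg_left hlip hs]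

theorem norm_sub_le_of_prox {ρ s' : ℝ} (hφ : ∀ a ∈ Y, ∀ b ∈ Y, |φ a - φ b| ≤ L * ‖a - b‖)
    (hL : 0 ≤ L) (hρ : 0 < ρ) {z p : E} (hz : z ∈ penaltyArgmin Y φ ψ s) (hp : p ∈ Y)
    (hpz : ρ * (s' * φ p + ψ p) + ‖p - z‖ ^ 2 / 2 ≤ ρ * (s' * φ z + ψ z)) :
    ‖z - p‖ ≤ 2 * ρ * |s - s'| * L := by
  have hopt := hz.2 p hp
  have hlip : (s' - s) * (φ z - φ p) ≤ |s - s'| * (L * ‖z - p‖) := by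
    calc (s' - s) * (φ z - φ p) ≤ |(s' - s) * (φ z - φ p)| := le_abs_self _
      _ = |s - s'| * |φ z - φ p| := by rw [abs_mul, abs_sub_comm s']
      _ ≤ |s - s'| * (L * ‖z - p‖) := mul_le_mul_of_nonneg_left (hφ z hz.1 p hp) (abs_nonneg _)
  rw [norm_sub_rev p z] at hpz
  -- adding `hpz` to the optimality of `z` at level `s` cancels `ψ`
  have hsq : ‖z - p‖ ^ 2 ≤ 2 * ρ * |s - s'| * L * ‖z - p‖ := by
    nlinarith [mul_le_mul_of_nonneg_left hlip hρ.le]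
  rcases (norm_nonneg (z - p)).eq_or_lt with h | h
  · rw [← h]; have := abs_nonneg (s - s'); positivity
  · nlinarith

theorem exists_mem_penaltyArgmin_norm_sub_le {ρ μ δ t : ℝ} (hY : IsCompact Y) (hYne : Y.Nonempty)
    (hφc : Continuous φ) (hψc : Continuous ψ)
    (hφ : ∀ a ∈ Y, ∀ b ∈ Y, |φ a - φ b| ≤ L * ‖a - b‖) (hL : 0 ≤ L) (hρ : 0 < ρ) (hμ : 0 < μ)
    (ht : 0 ≤ t) (htδ : 2 * t * L ≤ δ) {z p : E} (hz : z ∈ penaltyArgmin Y φ ψ s) (hp : p ∈ Y)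
    (hpz : ρ * ((s - t) * φ p + ψ p) + ‖p - z‖ ^ 2 / 2 ≤ ρ * ((s - t) * φ z + ψ z))
    (hEB : ρ⁻¹ * ‖z - p‖ ≤ δ → μ * infDist z (penaltyArgmin Y φ ψ (s - t)) ≤ ρ⁻¹ * ‖z - p‖) :
    ∃ z' ∈ penaltyArgmin Y φ ψ (s - t), ‖z - z'‖ ≤ 2 * t * L / μ := by
  have hdisp : ρ⁻¹ * ‖z - p‖ ≤ 2 * t * L := by
    have h := norm_sub_le_of_prox hφ hL hρ hz hp hpz
    rw [sub_sub_cancel, abs_of_nonneg ht] at h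
    rw [inv_mul_le_iff₀ hρ]; linarith
  have hcompact : IsCompact (penaltyArgmin Y φ ψ (s - t)) :=
    hY.of_isClosed_subset (isClosed_penaltyArgmin hY.isClosed hφc hψc) fun _ h => h.1
  obtain ⟨z', hz', hdist⟩ :=
    hcompact.exists_infDist_eq_dist (penaltyArgmin_nonempty hY hYne hφc hψc) z
  refine ⟨z', hz', ?_⟩
  rw [← dist_eq_norm, ← hdist, le_div_iff₀ hμ, mul_comm]
  exact (hEB (hdisp.trans htδ)).trans hdisp

theorem exists_mem_penaltyArgmin_sub_le {t r σ₀ : ℝ}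
    (hφ : ∀ a ∈ Y, ∀ b ∈ Y, |φ a - φ b| ≤ L * ‖a - b‖) (hL : 0 ≤ L) (ht : 0 ≤ t)
    (hstep : ∀ s ∈ Icc t σ₀, ∀ z ∈ penaltyArgmin Y φ ψ s,
      ∃ z' ∈ penaltyArgmin Y φ ψ (s - t), ‖z - z'‖ ≤ r)
    (hs : s ≤ σ₀) {y : E} (hy : y ∈ penaltyArgmin Y φ ψ s) :
    ∀ n : ℕ, n * t ≤ s → ∃ z ∈ penaltyArgmin Y φ ψ (s - n * t), ψ y - ψ z ≤ n * (s * L * r)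
  | 0, _ => ⟨y, by simpa using hy, by simp⟩
  | n + 1, hn => by
    push_cast at hn
    have hnt : 0 ≤ n * t := by positivity
    obtain ⟨z, hz, hyz⟩ := exists_mem_penaltyArgmin_sub_le hφ hL ht hstep hs hy n (by linarith)
    obtain ⟨z', hz', hzz'⟩ := hstep _ ⟨by linarith, by linarith⟩ z hz
    have hdrop := sub_le_of_mem_penaltyArgmin hφ (by linarith) hz hz'.1
    have hr : 0 ≤ L * r := mul_nonneg hL ((norm_nonneg _).trans hzz')
    refine ⟨z', by rwa [Nat.cast_succ, add_mul, one_mul, ← sub_sub], ?_⟩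
    push_cast
    nlinarith [mul_le_mul_of_nonneg_left hzz' (mul_nonneg (by linarith : 0 ≤ s - n * t) hL)]

end PenaltyArgmin

theorem abs_sub_le_of_norm_gradient_le {F : Type*} [NormedAddCommGroup F] [InnerProductSpace ℝ F]
    [CompleteSpace F] {φ : F → ℝ} {Y : Set F} {L : ℝ} (hφ : Differentiable ℝ φ)
    (hY : Convex ℝ Y) (hbound : ∀ y ∈ Y, ‖gradient φ y‖ ≤ L) :
    ∀ a ∈ Y, ∀ b ∈ Y, |φ a - φ b| ≤ L * ‖a - b‖ := fun a ha b hb => by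
  simpa [Real.norm_eq_abs] using hY.norm_image_sub_le_of_norm_fderiv_le (fun y _ => hφ y)
    (fun y hy => by simpa [gradient] using hbound y hy) hb ha

theorem exists_nat_mul_eq_and_mul_le {σ c δ : ℝ} (hσ : 0 ≤ σ) (hδ : 0 < δ) :
    ∃ (N : ℕ) (t : ℝ), 0 ≤ t ∧ N * t = σ ∧ c * t ≤ δ := by
  set N := ⌈c * σ / δ⌉₊ + 1
  have hNpos : (0 : ℝ) < N := by positivity
  have hN : c * σ < N * δ := by
    rw [← div_lt_iff₀ hδ]
    exact (Nat.le_ceil _).trans_lt (by simp [N])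
  refine ⟨N, σ / N, by positivity, by field_simp, ?_⟩
  rw [mul_div_assoc', div_le_iff₀ hNpos]
  linarith

/-- Under prox-EB with parameters `μ, δ, σ₀ > 0`, there is a universal
constant `C > 0` such that for every `x ∈ X`, every `σ ∈ [0, min(σ₀, δ/C_f)]`, and every
`y ∈ T(x,σ)`: `0 ≤ g(x,y) − g*(x) ≤ C (l_{f,0}²/μ) σ²`. -/
theorem stmt13 :
    ∃ C : ℝ, 0 < C ∧
    ∀ (dx dy : ℕ)
      (X : Set (EuclideanSpace ℝ (Fin dx)))
      (Y : Set (EuclideanSpace ℝ (Fin dy)))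
      (f g : EuclideanSpace ℝ (Fin dx) → EuclideanSpace ℝ (Fin dy) → ℝ)
      (lf0 lf1 lg1 Cf μ δ σ₀ ρ : ℝ)
      (prox : EuclideanSpace ℝ (Fin dx) → ℝ → EuclideanSpace ℝ (Fin dy) →
        EuclideanSpace ℝ (Fin dy))
      (T : EuclideanSpace ℝ (Fin dx) → ℝ → Set (EuclideanSpace ℝ (Fin dy)))
      (gstar : EuclideanSpace ℝ (Fin dx) → ℝ)
      (hXne : X.Nonempty) (hXclosed : IsClosed X) (hXconv : Convex ℝ X)
      (hYne : Y.Nonempty) (hYclosed : IsClosed Y) (hYconv : Convex ℝ Y)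
      (hYbdd : Bornology.IsBounded Y)
      (hfC2 : ContDiff ℝ 2 (Function.uncurry f))
      (hgC2 : ContDiff ℝ 2 (Function.uncurry g))
      (hLipf : ∀ p q : EuclideanSpace ℝ (Fin dx) × EuclideanSpace ℝ (Fin dy),
        ‖fderiv ℝ (Function.uncurry f) p - fderiv ℝ (Function.uncurry f) q‖ ≤ lf1 * ‖p - q‖)
      (hLipg : ∀ p q : EuclideanSpace ℝ (Fin dx) × EuclideanSpace ℝ (Fin dy),
        ‖fderiv ℝ (Function.uncurry g) p - fderiv ℝ (Function.uncurry g) q‖ ≤ lg1 * ‖p - q‖)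
      (hlf0 : ∀ x ∈ X, ∀ y ∈ Y, ‖gradient (fun y' => f x y') y‖ ≤ lf0)
      -- `C_f` is the supremum of `|f|` over `X × Y`
      (hCf : IsLUB ((fun p : EuclideanSpace ℝ (Fin dx) × EuclideanSpace ℝ (Fin dy) =>
        |f p.1 p.2|) '' (X ×ˢ Y)) Cf)
      (hμ : 0 < μ) (hδ : 0 < δ) (hσ₀ : 0 < σ₀)
      (hρpos : 0 < ρ) (hρ : ρ ≤ 1 / (8 * lg1)) (hσ₀l : σ₀ * lf1 ≤ lg1)
      -- `prox x σ y` is the unique minimizer over `z ∈ Y` of `ρ h_σ(x,z) + ‖z − y‖²/2`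
      (hprox : ∀ x (σ : ℝ), σ ∈ Icc 0 σ₀ → ∀ y, prox x σ y ∈ Y ∧ ∀ z ∈ Y,
        ρ * (σ * f x (prox x σ y) + g x (prox x σ y)) + ‖prox x σ y - y‖ ^ 2 / 2
          ≤ ρ * (σ * f x z + g x z) + ‖z - y‖ ^ 2 / 2)
      -- the lower-level solution set `T(x,σ)`
      (hT : ∀ x σ, T x σ = {y ∈ Y | ∀ z ∈ Y, σ * f x y + g x y ≤ σ * f x z + g x z})
      -- prox-EB
      (hEB : ∀ x ∈ X, ∀ σ ∈ Icc (0:ℝ) σ₀, ∀ y ∈ Y,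
        ρ⁻¹ * ‖y - prox x σ y‖ ≤ δ →
          μ * infDist y (T x σ) ≤ ρ⁻¹ * ‖y - prox x σ y‖)
      -- the lower-level optimal value `g*(x) = min_{z ∈ Y} g(x,z)`
      (hgstar : ∀ x, gstar x = sInf ((fun z => g x z) '' Y)),
      ∀ x ∈ X, ∀ σ ∈ Icc (0:ℝ) (min σ₀ (δ / Cf)), ∀ y ∈ T x σ,
        0 ≤ g x y - gstar x ∧ g x y - gstar x ≤ C * (lf0 ^ 2 / μ) * σ ^ 2 := by
  refine ⟨2, two_pos, ?_⟩
  intro dx dy X Y f g lf0 lf1 lg1 Cf μ δ σ₀ ρ prox T gstar _ _ _ hYne hYclosed hYconv hYbdd hfC2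
    hgC2 _ _ hlf0 _ hμ hδ _ hρ _ _ hprox hT hEB hgstar x hx σ hσ y hy
  have hY : IsCompact Y := isCompact_of_isClosed_isBounded hYclosed hYbdd
  have hTx : T x = penaltyArgmin Y (f x) (g x) := funext (hT x)
  have hfc : Continuous (f x) := hfC2.continuous.uncurry_left x
  have hgc : Continuous (g x) := hgC2.continuous.uncurry_left x
  have hfx : Differentiable ℝ (f x) :=
    (hfC2.differentiable two_ne_zero).comp ((differentiable_const x).prodMk differentiable_id)
  have hLip := abs_sub_le_of_norm_gradient_le hfx hYconv (hlf0 x hx)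
  have hL : 0 ≤ lf0 := (norm_nonneg _).trans (hlf0 x hx _ hYne.some_mem)
  obtain ⟨N, t, ht, hNt, htδ⟩ := exists_nat_mul_eq_and_mul_le (c := 2 * lf0) hσ.1 hδ
  have hstep : ∀ s ∈ Icc t σ₀, ∀ z ∈ penaltyArgmin Y (f x) (g x) s,
      ∃ z' ∈ penaltyArgmin Y (f x) (g x) (s - t), ‖z - z'‖ ≤ 2 * t * lf0 / μ := by
    intro s hs z hz
    have hs' : s - t ∈ Icc 0 σ₀ := ⟨by linarith [hs.1], by linarith [hs.2]⟩
    exact exists_mem_penaltyArgmin_norm_sub_le hY hYne hfc hgc hLip hL hρ hμ ht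
      (by linarith : 2 * t * lf0 ≤ δ) hz (hprox x _ hs' z).1
      (by simpa using (hprox x _ hs' z).2 z hz.1)
      (by simpa only [hTx] using hEB x hx _ hs' z hz.1)
  rw [hTx] at hy
  obtain ⟨z, hz, hyz⟩ := exists_mem_penaltyArgmin_sub_le hLip hL ht hstep
    (hσ.2.trans (min_le_left _ _)) hy N hNt.le
  rw [hNt, sub_self] at hz
  rw [hgstar x, csInf_image_eq_of_mem_penaltyArgmin_zero hz]
  refine ⟨sub_nonneg.2 (le_of_mem_penaltyArgmin_zero hz hy.1), hyz.trans (le_of_eq ?_)⟩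
  rw [← hNt]
  field_simp
end
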